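/- Let Δ > 0, γ > Δ and C > 0. Let F, G : ℂ → ℂ be continuous on the closed upper half-plane {z : Im z ≥ 0}, holomorphic on {z : Im z > 0}, and satisfy |F(z)| ≤ C(1 + |z|)^{−γ} and |G(z)| ≤ C(1 + |z|)^{−γ} for all z with Im z ≥ 0. For w in the closed strip S̄ = {w ∈ ℂ : 0 ≤ Im w ≤ 1} define H(w) = ∫₀^∞ ω^{2Δ−1} F(−e^{−πw} ω) G(e^{πw} ω) dω (note that for such w both arguments −e^{−πw}ω and e^{πw}ω lie in the closed upper half-plane for ω ≥ 0, and the integral converges absolutely). Then H is continuous on S̄, holomorphic on the open strip {0 < Im w < 1}, and its boundary values are H(s) = ∫₀^∞ ω^{2Δ−1} F(−e^{−πs}ω) G(e^{πs}ω) dω and H(s + i) = ∫₀^∞ ω^{2Δ−1} F(e^{−πs}ω) G(−e^{πs}ω) dω for s ∈ ℝ. -/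

import Mathlib

/-!
On the closed strip `0 ≤ Im w ≤ 1` both arguments `-e^{-πw} ω = e^{π(i - w)} ω` and `e^{πw} ω`
lie in the closed upper half-plane, since `sin (π Im w) ≥ 0`, and their moduli `e^{∓π Re w} ω`
have product `ω²`; hence `(1 + e^{-π Re w} ω)(1 + e^{π Re w} ω) ≥ (1 + ω)²` and the integrand is
dominated, uniformly on the strip, by `C² ω^{2Δ-1} (1 + ω)^{-2γ}`, which is integrable because
`0 < Δ < γ`. Dominated convergence gives continuity. For holomorphy, Cauchy's estimate turns this
uniform bound into a locally uniform bound on the `w`-derivative of the integrand, so one may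
differentiate under the integral sign.
-/

open MeasureTheory Filter Topology Metric Set
open scoped Real

/-- The KMS analytic function: `H(w) = ∫₀^∞ ω^{2Δ-1} F(-e^{-πw} ω) G(e^{πw} ω) dω`. -/
noncomputable def kmsFun (Δ : ℝ) (F G : ℂ → ℂ) (w : ℂ) : ℂ :=
  ∫ ω in Set.Ioi (0 : ℝ),
    ((ω ^ (2 * Δ - 1) : ℝ) : ℂ) *
      F (-(Complex.exp (-((Real.pi : ℂ)) * w)) * (ω : ℂ)) *
      G (Complex.exp ((Real.pi : ℂ) * w) * (ω : ℂ))

theorem aestronglyMeasurable_deriv_of_eventually {𝕜 α E : Type*} [NontriviallyNormedField 𝕜]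
    [MeasurableSpace α] {μ : Measure α} [NormedAddCommGroup E] [NormedSpace 𝕜 E]
    {f : 𝕜 → α → E} {x₀ : 𝕜}
    (hf_meas : ∀ᶠ x in 𝓝 x₀, AEStronglyMeasurable (f x) μ)
    (hf_diff : ∀ᵐ a ∂μ, DifferentiableAt 𝕜 (f · a) x₀) :
    AEStronglyMeasurable (fun a => deriv (f · a) x₀) μ := by
  obtain ⟨t, ht⟩ := exists_seq_tendsto (𝓝[≠] (0 : 𝕜))
  have hshift : Tendsto (fun n => x₀ + t n) atTop (𝓝 x₀) := by
    simpa using tendsto_const_nhds.add (tendsto_nhds_of_tendsto_nhdsWithin ht)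
  obtain ⟨N, hN⟩ := eventually_atTop.1 (hshift.eventually hf_meas)
  refine aestronglyMeasurable_of_tendsto_ae atTop
    (f := fun n a => (t (n + N))⁻¹ • (f (x₀ + t (n + N)) a - f x₀ a))
    (fun n => ((hN _ le_add_self).sub hf_meas.self_of_nhds).const_smul _) ?_
  filter_upwards [hf_diff] with a ha
  exact ha.hasDerivAt.tendsto_slope_zero.comp ((tendsto_add_atTop_iff_nat N).2 ht)

theorem differentiableOn_integral_of_dominated {α E : Type*} [MeasurableSpace α]
    {μ : Measure α} [NormedAddCommGroup E] [NormedSpace ℂ E] [CompleteSpace E]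
    {f : ℂ → α → E} {U : Set ℂ} {bound : α → ℝ} (hU : IsOpen U)
    (hf_meas : ∀ w ∈ U, AEStronglyMeasurable (f w) μ)
    (hf_diff : ∀ᵐ a ∂μ, DifferentiableOn ℂ (f · a) U)
    (h_bound : ∀ᵐ a ∂μ, ∀ w ∈ U, ‖f w a‖ ≤ bound a) (h_int : Integrable bound μ) :
    DifferentiableOn ℂ (fun w => ∫ a, f w a ∂μ) U := by
  intro w₀ hw₀
  obtain ⟨ε, hε, hball⟩ := Metric.isOpen_iff.1 hU w₀ hw₀
  obtain ⟨r, hr, hrε⟩ : ∃ r, 0 < r ∧ r + r = ε := ⟨ε / 2, half_pos hε, add_halves ε⟩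
  have hsub : ∀ w ∈ ball w₀ r, closedBall w r ⊆ U := fun w hw z hz =>
    hball (mem_ball.2 (by linarith [dist_triangle z w w₀, mem_closedBall.1 hz, mem_ball.1 hw]))
  have hmeas : ∀ᶠ w in 𝓝 w₀, AEStronglyMeasurable (f w) μ :=
    eventually_of_mem (hU.mem_nhds hw₀) hf_meas
  have hderiv_bound : ∀ᵐ a ∂μ, ∀ w ∈ ball w₀ r, ‖deriv (f · a) w‖ ≤ bound a / r := by
    filter_upwards [hf_diff, h_bound] with a hd hb w hw
    exact Complex.norm_deriv_le_of_forall_mem_sphere_norm_le hr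
      (hd.diffContOnCl_ball (hsub w hw)) fun z hz => hb z (hsub w hw (sphere_subset_closedBall hz))
  have hasDeriv : ∀ᵐ a ∂μ, ∀ w ∈ ball w₀ r, HasDerivAt (f · a) (deriv (f · a) w) w := by
    filter_upwards [hf_diff] with a hd w hw
    exact (hd.differentiableAt (hU.mem_nhds (hsub w hw (mem_closedBall_self hr.le)))).hasDerivAt
  have hderiv_meas : AEStronglyMeasurable (fun a => deriv (f · a) w₀) μ :=
    aestronglyMeasurable_deriv_of_eventually hmeas
      (hf_diff.mono fun a hd => hd.differentiableAt (hU.mem_nhds hw₀))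
  have hint : Integrable (f w₀) μ :=
    h_int.mono' (hf_meas w₀ hw₀) (h_bound.mono fun a ha => ha w₀ hw₀)
  exact (hasDerivAt_integral_of_dominated_loc_of_deriv_le (ball_mem_nhds w₀ hr) hmeas hint
    hderiv_meas hderiv_bound (h_int.div_const r) hasDeriv).2.differentiableAt.differentiableWithinAt

theorem rpow_neg_mul_rpow_neg_le_of_mul_eq_one {γ x y ω : ℝ} (hγ : 0 ≤ γ) (hx : 0 ≤ x) (hy : 0 ≤ y)
    (hxy : x * y = 1) (hω : 0 ≤ ω) :
    (1 + x * ω) ^ (-γ) * (1 + y * ω) ^ (-γ) ≤ (1 + ω) ^ (-(2 * γ)) := by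
  have hsum : 2 ≤ x + y := by nlinarith [sq_nonneg (x - y)]
  have hsq : (1 + ω) ^ (2 : ℝ) ≤ (1 + x * ω) * (1 + y * ω) := by
    rw [Real.rpow_two]; nlinarith [mul_nonneg (mul_nonneg hω hω) (sub_nonneg.2 hsum)]
  calc (1 + x * ω) ^ (-γ) * (1 + y * ω) ^ (-γ)
      = ((1 + x * ω) * (1 + y * ω)) ^ (-γ) := (Real.mul_rpow (by positivity) (by positivity)).symm
    _ ≤ ((1 + ω) ^ (2 : ℝ)) ^ (-γ) := Real.rpow_le_rpow_of_nonpos (by positivity) hsq (by linarith)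
    _ = (1 + ω) ^ (-(2 * γ)) := by rw [← Real.rpow_mul (by positivity)]; ring_nf

theorem integrableOn_rpow_mul_one_add_rpow_neg {a b : ℝ} (ha : -1 < a) (hab : a - b < -1) :
    IntegrableOn (fun ω : ℝ => ω ^ a * (1 + ω) ^ (-b)) (Ioi 0) := by
  have hcont : ContinuousOn (fun ω : ℝ => ω ^ a * (1 + ω) ^ (-b)) (Ioi 0) :=
    (continuousOn_id.rpow_const fun ω hω => Or.inl (ne_of_gt hω)).mul
      ((by fun_prop : Continuous fun ω : ℝ => 1 + ω).continuousOn.rpow_const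
        fun ω (hω : 0 < ω) => Or.inl (by positivity))
  rw [← Ioc_union_Ioi_eq_Ioi zero_le_one]
  refine IntegrableOn.union ?_ ?_
  · refine Integrable.mono' (g := fun ω : ℝ => ω ^ a)
      ((intervalIntegrable_iff_integrableOn_Ioc_of_le zero_le_one).1
        (intervalIntegral.intervalIntegrable_rpow' ha))
      ((hcont.mono Ioc_subset_Ioi_self).aestronglyMeasurable measurableSet_Ioc) ?_
    filter_upwards [ae_restrict_mem measurableSet_Ioc] with ω hω
    rw [Real.norm_of_nonneg (by have := hω.1; positivity)]
    exact mul_le_of_le_one_right (by have := hω.1; positivity)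
      (Real.rpow_le_one_of_one_le_of_nonpos (by linarith [hω.1]) (by linarith))
  · refine Integrable.mono' (g := fun ω : ℝ => ω ^ (a + -b))
      (integrableOn_Ioi_rpow_of_lt (by linarith) one_pos)
      ((hcont.mono (Ioi_subset_Ioi zero_le_one)).aestronglyMeasurable measurableSet_Ioi) ?_
    filter_upwards [ae_restrict_mem measurableSet_Ioi] with ω (hω : 1 < ω)
    rw [Real.norm_of_nonneg (by positivity), Real.rpow_add (by linarith)]
    exact mul_le_mul_of_nonneg_left
      (Real.rpow_le_rpow_of_nonpos (by positivity) (by linarith) (by linarith)) (by positivity)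

theorem im_exp_pi_mul_ofReal (z : ℂ) (ω : ℝ) :
    (Complex.exp (π * z) * ω).im = Real.exp (π * z.re) * Real.sin (π * z.im) * ω := by
  simp [Complex.exp_im, Complex.mul_re, Complex.mul_im]

theorem norm_exp_pi_mul_ofReal (z : ℂ) {ω : ℝ} (hω : 0 ≤ ω) :
    ‖Complex.exp (π * z) * ω‖ = Real.exp (π * z.re) * ω := by
  simp [Complex.norm_exp, Complex.mul_re, abs_of_nonneg hω]

theorem im_exp_pi_mul_ofReal_nonneg {z : ℂ} (h0 : 0 ≤ z.im) (h1 : z.im ≤ 1) {ω : ℝ}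
    (hω : 0 ≤ ω) : 0 ≤ (Complex.exp (π * z) * ω).im := by
  rw [im_exp_pi_mul_ofReal]
  have := Real.sin_nonneg_of_nonneg_of_le_pi (x := π * z.im) (by positivity)
    (by nlinarith [Real.pi_pos])
  positivity

theorem im_exp_pi_mul_ofReal_pos {z : ℂ} (h0 : 0 < z.im) (h1 : z.im < 1) {ω : ℝ}
    (hω : 0 < ω) : 0 < (Complex.exp (π * z) * ω).im := by
  rw [im_exp_pi_mul_ofReal]
  have := Real.sin_pos_of_pos_of_lt_pi (x := π * z.im) (by positivity) (by nlinarith [Real.pi_pos])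
  positivity

theorem neg_exp_neg_pi_mul (w : ℂ) :
    -Complex.exp (-π * w) = Complex.exp (π * (Complex.I - w)) := by
  rw [mul_sub, Complex.exp_sub, Complex.exp_pi_mul_I, neg_mul,
    Complex.exp_neg, neg_div, one_div]

noncomputable def kmsIntegrand (Δ : ℝ) (F G : ℂ → ℂ) (w : ℂ) (ω : ℝ) : ℂ :=
  ((ω ^ (2 * Δ - 1) : ℝ) : ℂ) * F (-(Complex.exp (-((Real.pi : ℂ)) * w)) * (ω : ℂ)) *
    G (Complex.exp ((Real.pi : ℂ) * w) * (ω : ℂ))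

theorem kmsIntegrand_eq_exp_pi_mul_I_sub (Δ : ℝ) (F G : ℂ → ℂ) (w : ℂ) (ω : ℝ) :
    kmsIntegrand Δ F G w ω = ((ω ^ (2 * Δ - 1) : ℝ) : ℂ) *
      F (Complex.exp (π * (Complex.I - w)) * ω) * G (Complex.exp (π * w) * ω) := by
  rw [kmsIntegrand, neg_exp_neg_pi_mul]

theorem kmsFun_eq_integral_kmsIntegrand (Δ : ℝ) (F G : ℂ → ℂ) :
    kmsFun Δ F G = fun w => ∫ ω in Ioi 0, kmsIntegrand Δ F G w ω :=
  rfl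

theorem norm_kmsIntegrand_le {Δ γ C : ℝ} (hγ : 0 ≤ γ) {F G : ℂ → ℂ}
    (hFb : ∀ z : ℂ, 0 ≤ z.im → ‖F z‖ ≤ C * (1 + ‖z‖) ^ (-γ))
    (hGb : ∀ z : ℂ, 0 ≤ z.im → ‖G z‖ ≤ C * (1 + ‖z‖) ^ (-γ))
    {w : ℂ} (h0 : 0 ≤ w.im) (h1 : w.im ≤ 1) {ω : ℝ} (hω : 0 ≤ ω) :
    ‖kmsIntegrand Δ F G w ω‖ ≤ C ^ 2 * (ω ^ (2 * Δ - 1) * (1 + ω) ^ (-(2 * γ))) := by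
  have hF := hFb _ (im_exp_pi_mul_ofReal_nonneg (z := Complex.I - w) (by simpa) (by simpa) hω)
  have hG := hGb _ (im_exp_pi_mul_ofReal_nonneg h0 h1 hω)
  rw [norm_exp_pi_mul_ofReal _ hω] at hF hG
  have hprod := rpow_neg_mul_rpow_neg_le_of_mul_eq_one hγ (Real.exp_pos _).le (Real.exp_pos _).le
    (by rw [← Real.exp_add]; simp) hω (x := Real.exp (π * (Complex.I - w).re))
    (y := Real.exp (π * w.re))
  have hs : 0 ≤ ω ^ (2 * Δ - 1) := by positivity
  rw [kmsIntegrand_eq_exp_pi_mul_I_sub, norm_mul, norm_mul, Complex.norm_real,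
    Real.norm_of_nonneg hs]
  calc ω ^ (2 * Δ - 1) * ‖F _‖ * ‖G _‖
      ≤ ω ^ (2 * Δ - 1) * (C * (1 + Real.exp (π * (Complex.I - w).re) * ω) ^ (-γ)) *
          (C * (1 + Real.exp (π * w.re) * ω) ^ (-γ)) :=
        mul_le_mul (mul_le_mul_of_nonneg_left hF hs) hG (norm_nonneg _)
          (mul_nonneg hs ((norm_nonneg _).trans hF))
    _ = C ^ 2 * (ω ^ (2 * Δ - 1) * ((1 + Real.exp (π * (Complex.I - w).re) * ω) ^ (-γ) *
          (1 + Real.exp (π * w.re) * ω) ^ (-γ))) := by ring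
    _ ≤ C ^ 2 * (ω ^ (2 * Δ - 1) * (1 + ω) ^ (-(2 * γ))) := by gcongr

theorem continuousOn_kmsIntegrand {Δ : ℝ} {F G : ℂ → ℂ}
    (hFc : ContinuousOn F {z : ℂ | 0 ≤ z.im}) (hGc : ContinuousOn G {z : ℂ | 0 ≤ z.im}) :
    ContinuousOn (fun p : ℂ × ℝ => kmsIntegrand Δ F G p.1 p.2)
      ({w : ℂ | 0 ≤ w.im ∧ w.im ≤ 1} ×ˢ Ioi 0) := by
  simp only [kmsIntegrand_eq_exp_pi_mul_I_sub]
  refine ContinuousOn.mul (ContinuousOn.mul ?_ ?_) ?_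
  · exact Complex.continuous_ofReal.comp_continuousOn
      (continuousOn_snd.rpow_const fun p hp => Or.inl (ne_of_gt hp.2))
  · refine hFc.comp (by fun_prop) fun p hp => ?_
    exact im_exp_pi_mul_ofReal_nonneg (z := Complex.I - p.1) (by simpa using hp.1.2)
      (by simpa using hp.1.1) (le_of_lt hp.2)
  · exact hGc.comp (by fun_prop) fun p hp =>
      im_exp_pi_mul_ofReal_nonneg hp.1.1 hp.1.2 (le_of_lt hp.2)

theorem differentiableOn_kmsIntegrand {Δ : ℝ} {F G : ℂ → ℂ}
    (hFa : DifferentiableOn ℂ F {z : ℂ | 0 < z.im})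
    (hGa : DifferentiableOn ℂ G {z : ℂ | 0 < z.im}) {ω : ℝ} (hω : 0 < ω) :
    DifferentiableOn ℂ (fun w => kmsIntegrand Δ F G w ω) {w : ℂ | 0 < w.im ∧ w.im < 1} := by
  simp only [kmsIntegrand_eq_exp_pi_mul_I_sub]
  refine ((differentiableOn_const _).mul ?_).mul ?_
  · refine hFa.comp (by fun_prop) fun w hw => ?_
    exact im_exp_pi_mul_ofReal_pos (z := Complex.I - w) (by simpa using hw.2)
      (by simpa using hw.1) hω
  · exact hGa.comp (by fun_prop) fun w hw => im_exp_pi_mul_ofReal_pos hw.1 hw.2 hω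

theorem kmsFun_ofReal (Δ : ℝ) (F G : ℂ → ℂ) (s : ℝ) :
    kmsFun Δ F G s = ∫ ω in Ioi (0 : ℝ), ((ω ^ (2 * Δ - 1) : ℝ) : ℂ) *
      F ((-Real.exp (-(π * s)) * ω : ℝ) : ℂ) * G ((Real.exp (π * s) * ω : ℝ) : ℂ) := by
  simp only [kmsFun]
  push_cast
  simp only [neg_mul]

theorem kmsFun_ofReal_add_I (Δ : ℝ) (F G : ℂ → ℂ) (s : ℝ) :
    kmsFun Δ F G (s + Complex.I) = ∫ ω in Ioi (0 : ℝ), ((ω ^ (2 * Δ - 1) : ℝ) : ℂ) *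
      F ((Real.exp (-(π * s)) * ω : ℝ) : ℂ) * G ((-Real.exp (π * s) * ω : ℝ) : ℂ) := by
  simp only [kmsFun, mul_add, neg_mul, Complex.exp_add, Complex.exp_neg, Complex.exp_pi_mul_I]
  push_cast
  simp only [neg_mul, Complex.exp_neg, inv_neg, inv_one, mul_one, mul_neg, neg_neg]

theorem kms_strip_analyticity_general
    (Δ γ C : ℝ) (hΔ : 0 < Δ) (hγ : Δ < γ)
    (F G : ℂ → ℂ)
    (hFc : ContinuousOn F {z : ℂ | 0 ≤ z.im})
    (hFa : DifferentiableOn ℂ F {z : ℂ | 0 < z.im})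
    (hFb : ∀ z : ℂ, 0 ≤ z.im → ‖F z‖ ≤ C * (1 + ‖z‖) ^ (-γ))
    (hGc : ContinuousOn G {z : ℂ | 0 ≤ z.im})
    (hGa : DifferentiableOn ℂ G {z : ℂ | 0 < z.im})
    (hGb : ∀ z : ℂ, 0 ≤ z.im → ‖G z‖ ≤ C * (1 + ‖z‖) ^ (-γ)) :
    (∀ w : ℂ, 0 ≤ w.im → w.im ≤ 1 →
      IntegrableOn
        (fun ω : ℝ => ((ω ^ (2 * Δ - 1) : ℝ) : ℂ) *
          F (-(Complex.exp (-((Real.pi : ℂ)) * w)) * (ω : ℂ)) *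
          G (Complex.exp ((Real.pi : ℂ) * w) * (ω : ℂ)))
        (Set.Ioi 0)) ∧
    ContinuousOn (kmsFun Δ F G) {w : ℂ | 0 ≤ w.im ∧ w.im ≤ 1} ∧
    DifferentiableOn ℂ (kmsFun Δ F G) {w : ℂ | 0 < w.im ∧ w.im < 1} ∧
    (∀ s : ℝ, kmsFun Δ F G (s : ℂ) =
      ∫ ω in Set.Ioi (0 : ℝ),
        ((ω ^ (2 * Δ - 1) : ℝ) : ℂ) *
          F (((-(Real.exp (-(Real.pi * s))) * ω : ℝ) : ℂ)) *
          G (((Real.exp (Real.pi * s) * ω : ℝ) : ℂ))) ∧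
    (∀ s : ℝ, kmsFun Δ F G ((s : ℂ) + Complex.I) =
      ∫ ω in Set.Ioi (0 : ℝ),
        ((ω ^ (2 * Δ - 1) : ℝ) : ℂ) *
          F (((Real.exp (-(Real.pi * s)) * ω : ℝ) : ℂ)) *
          G (((-(Real.exp (Real.pi * s)) * ω : ℝ) : ℂ))) := by
  have hmajorant : Integrable (fun ω : ℝ => C ^ 2 * (ω ^ (2 * Δ - 1) * (1 + ω) ^ (-(2 * γ))))
      (volume.restrict (Ioi 0)) :=
    (integrableOn_rpow_mul_one_add_rpow_neg (by linarith) (by linarith)).const_mul _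
  have hbound : ∀ᵐ ω ∂volume.restrict (Ioi 0), ∀ w ∈ {w : ℂ | 0 ≤ w.im ∧ w.im ≤ 1},
      ‖kmsIntegrand Δ F G w ω‖ ≤ C ^ 2 * (ω ^ (2 * Δ - 1) * (1 + ω) ^ (-(2 * γ))) := by
    filter_upwards [ae_restrict_mem measurableSet_Ioi] with ω hω w hw
    exact norm_kmsIntegrand_le (hΔ.trans hγ).le hFb hGb hw.1 hw.2 (le_of_lt hω)
  have hcont := continuousOn_kmsIntegrand (Δ := Δ) hFc hGc
  have hmeas : ∀ w ∈ {w : ℂ | 0 ≤ w.im ∧ w.im ≤ 1},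
      AEStronglyMeasurable (kmsIntegrand Δ F G w) (volume.restrict (Ioi 0)) := fun w hw =>
    (hcont.comp (f := fun ω => (w, ω)) (by fun_prop)
      fun ω hω => mk_mem_prod hw hω).aestronglyMeasurable measurableSet_Ioi
  have hopen_sub : {w : ℂ | 0 < w.im ∧ w.im < 1} ⊆ {w : ℂ | 0 ≤ w.im ∧ w.im ≤ 1} :=
    fun w hw => ⟨hw.1.le, hw.2.le⟩
  refine ⟨fun w h0 h1 => ?_, ?_, ?_, kmsFun_ofReal Δ F G, kmsFun_ofReal_add_I Δ F G⟩
  · exact (hmajorant.mono' (hmeas w ⟨h0, h1⟩) (hbound.mono fun ω hω => hω w ⟨h0, h1⟩) :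
      IntegrableOn (kmsIntegrand Δ F G w) (Ioi 0) volume)
  all_goals rw [kmsFun_eq_integral_kmsIntegrand]
  · refine continuousOn_of_dominated hmeas (fun w hw => hbound.mono fun ω hω => hω w hw)
      hmajorant ?_
    filter_upwards [ae_restrict_mem measurableSet_Ioi] with ω hω
    exact hcont.comp (f := fun w => (w, ω)) (by fun_prop) fun w hw => mk_mem_prod hw hω
  · refine differentiableOn_integral_of_dominated
      ((isOpen_lt continuous_const Complex.continuous_im).inter
        (isOpen_lt Complex.continuous_im continuous_const))
      (fun w hw => hmeas w (hopen_sub hw)) ?_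
      (hbound.mono fun ω hω w hw => hω w (hopen_sub hw)) hmajorant
    filter_upwards [ae_restrict_mem measurableSet_Ioi] with ω hω
    exact differentiableOn_kmsIntegrand hFa hGa hω

/-- Analytic core of Theorem 8 (modular flow of the future algebra is dilatation / KMS
condition): for `F, G` continuous on the closed upper half-plane, holomorphic on the open
upper half-plane, with decay `‖F(z)‖, ‖G(z)‖ ≤ C(1 + ‖z‖)^{-γ}`, `γ > Δ > 0`, the function
`H(w) = ∫₀^∞ ω^{2Δ-1} F(-e^{-πw}ω) G(e^{πw}ω) dω` has an absolutely convergent integrand on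
the closed strip `0 ≤ Im w ≤ 1`, is continuous there, holomorphic on the open strip, with the
stated boundary values at `Im w = 0` and `Im w = 1`. -/
theorem kms_strip_analyticity
    (Δ γ C : ℝ) (hΔ : 0 < Δ) (hγ : Δ < γ) (hC : 0 < C)
    (F G : ℂ → ℂ)
    (hFc : ContinuousOn F {z : ℂ | 0 ≤ z.im})
    (hFa : DifferentiableOn ℂ F {z : ℂ | 0 < z.im})
    (hFb : ∀ z : ℂ, 0 ≤ z.im → ‖F z‖ ≤ C * (1 + ‖z‖) ^ (-γ))
    (hGc : ContinuousOn G {z : ℂ | 0 ≤ z.im})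
    (hGa : DifferentiableOn ℂ G {z : ℂ | 0 < z.im})
    (hGb : ∀ z : ℂ, 0 ≤ z.im → ‖G z‖ ≤ C * (1 + ‖z‖) ^ (-γ)) :
    (∀ w : ℂ, 0 ≤ w.im → w.im ≤ 1 →
      IntegrableOn
        (fun ω : ℝ => ((ω ^ (2 * Δ - 1) : ℝ) : ℂ) *
          F (-(Complex.exp (-((Real.pi : ℂ)) * w)) * (ω : ℂ)) *
          G (Complex.exp ((Real.pi : ℂ) * w) * (ω : ℂ)))
        (Set.Ioi 0)) ∧
    ContinuousOn (kmsFun Δ F G) {w : ℂ | 0 ≤ w.im ∧ w.im ≤ 1} ∧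
    DifferentiableOn ℂ (kmsFun Δ F G) {w : ℂ | 0 < w.im ∧ w.im < 1} ∧
    (∀ s : ℝ, kmsFun Δ F G (s : ℂ) =
      ∫ ω in Set.Ioi (0 : ℝ),
        ((ω ^ (2 * Δ - 1) : ℝ) : ℂ) *
          F (((-(Real.exp (-(Real.pi * s))) * ω : ℝ) : ℂ)) *
          G (((Real.exp (Real.pi * s) * ω : ℝ) : ℂ))) ∧
    (∀ s : ℝ, kmsFun Δ F G ((s : ℂ) + Complex.I) =
      ∫ ω in Set.Ioi (0 : ℝ),
        ((ω ^ (2 * Δ - 1) : ℝ) : ℂ) *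
          F (((Real.exp (-(Real.pi * s)) * ω : ℝ) : ℂ)) *
          G (((-(Real.exp (Real.pi * s)) * ω : ℝ) : ℂ))) :=
  kms_strip_analyticity_general Δ γ C hΔ hγ F G hFc hFa hFb hGc hGa hGb
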